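/- Let X be a complex Banach space with open unit ball B, let S be a finite rank bounded linear operator on X such that P = I - S has norm one, and let φ be a character in the fiber M₀(B) of the spectrum of A_u(B) over 0. Then for every f ∈ A_u(B), the Gelfand transforms satisfy f̂(φ) = (f ∘ P)^(φ), i.e. φ(f) = φ(f ∘ P). -/

import Mathlib

open Metric Filter Topology

namespace ClusterValue

variable (X : Type*) [NormedAddCommGroup X] [NormedSpace ℂ X]

/-- Membership in `A_u(B)`: analytic on the open unit ball, bounded there,
and uniformly continuous there. -/
def MemAu (f : X → ℂ) : Prop :=
  AnalyticOn ℂ f (ball (0 : X) 1) ∧ (∃ C : ℝ, ∀ x ∈ ball (0 : X) 1, ‖f x‖ ≤ C) ∧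
    UniformContinuousOn f (ball (0 : X) 1)

/-- Membership in `H^∞(B)`: analytic on the open unit ball and bounded there. -/
def MemHinf (f : X → ℂ) : Prop :=
  AnalyticOn ℂ f (ball (0 : X) 1) ∧ (∃ C : ℝ, ∀ x ∈ ball (0 : X) 1, ‖f x‖ ≤ C)

/-- A character (nonzero continuous multiplicative linear functional) of the algebra
of functions on the open unit ball of `X` determined by the membership predicate `Mem`.
Functions are identified when they agree on the ball. -/
structure Character (Mem : (X → ℂ) → Prop) : Type _ where
  toFun : (X → ℂ) → ℂ
  congr' : ∀ f g, Mem f → Mem g → (∀ x ∈ ball (0 : X) 1, f x = g x) → toFun f = toFun g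
  map_add' : ∀ f g, Mem f → Mem g → toFun (f + g) = toFun f + toFun g
  map_mul' : ∀ f g, Mem f → Mem g → toFun (f * g) = toFun f * toFun g
  map_smul' : ∀ (c : ℂ) (f), Mem f → toFun (c • f) = c * toFun f
  map_one' : toFun 1 = 1
  continuous' : ∃ C : ℝ, ∀ (f : X → ℂ) (M : ℝ), Mem f →
    (∀ x ∈ ball (0 : X) 1, ‖f x‖ ≤ M) → ‖toFun f‖ ≤ C * M

variable {X}

/-- The fiber over `0`: characters annihilating all continuous linear functionals. -/
def Character.inFiberZero {Mem : (X → ℂ) → Prop} (τ : Character X Mem) : Prop :=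
  ∀ φ : X →L[ℂ] ℂ, τ.toFun ⇑φ = 0

/-- The fiber over `x'' ∈ X**`. -/
def Character.inFiber {Mem : (X → ℂ) → Prop} (τ : Character X Mem)
    (x'' : (X →L[ℂ] ℂ) →L[ℂ] ℂ) : Prop :=
  ∀ φ : X →L[ℂ] ℂ, τ.toFun ⇑φ = x'' φ

variable (X)

/-- The cluster set of `f` at `0`: limits of `f` along weakly null nets (filters) in the ball. -/
def clusterSetZero (f : X → ℂ) : Set ℂ :=
  {z | ∃ l : Filter X, l.NeBot ∧ l ≤ 𝓟 (ball (0 : X) 1) ∧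
    (∀ φ : X →L[ℂ] ℂ, Tendsto (fun x => φ x) l (𝓝 0)) ∧ Tendsto f l (𝓝 z)}

/-- The cluster set of `f` at `x'' ∈ X**`: limits of `f` along nets in the ball converging
weak-star to `x''`. -/
def clusterSet (f : X → ℂ) (x'' : (X →L[ℂ] ℂ) →L[ℂ] ℂ) : Set ℂ :=
  {z | ∃ l : Filter X, l.NeBot ∧ l ≤ 𝓟 (ball (0 : X) 1) ∧
    (∀ φ : X →L[ℂ] ℂ, Tendsto (fun x => φ x) l (𝓝 (x'' φ))) ∧ Tendsto f l (𝓝 z)}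

/-- A finite rank (bounded linear) operator. -/
def FiniteRank (S : X →L[ℂ] X) : Prop :=
  FiniteDimensional ℂ ↥(LinearMap.range (S : X →ₗ[ℂ] X))

/-- Finite type polynomials: the subalgebra of functions generated by the
continuous linear functionals (and constants). -/
def IsFiniteTypePoly (p : X → ℂ) : Prop :=
  p ∈ Algebra.adjoin ℂ (Set.range fun φ : X →L[ℂ] ℂ => (⇑φ : X → ℂ))

/-- Membership in `A(B)`: uniform limits on the ball of finite type polynomials. -/
def MemA (f : X → ℂ) : Prop :=
  ∀ ε > (0 : ℝ), ∃ p : X → ℂ, IsFiniteTypePoly X p ∧ ∀ x ∈ ball (0 : X) 1, ‖f x - p x‖ ≤ ε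

/-- A continuous polynomial: a finite sum of (diagonals of) continuous multilinear maps. -/
def IsContPoly (p : X → ℂ) : Prop :=
  ∃ (N : ℕ) (M : ∀ k : ℕ, ContinuousMultilinearMap ℂ (fun _ : Fin k => X) ℂ),
    ∀ x, p x = ∑ k ∈ Finset.range N, M k (fun _ => x)

end ClusterValue

/-!
Fix `r < 1` and join `r • P` to `r • (P + S) = r • id` by the segment `W t = r • (P + t • S)`,
`t ∈ [0, 1]`, of operators mapping `B` into the closed ball of radius `r`. On that smaller ball
Cauchy estimates bound the first and second derivatives of `f`, so every `f ∘ W t` lies in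
`A_u(B)` and `G t = φ(f ∘ W t)` satisfies `G s - G t = (s - t) φ(a_t) + O((s - t)²)` with
`a_t x = f'(W t x)(r S x)`. As `S` has finite rank, `a_t = ∑ ξ_j b_j` with `ξ_j ∈ X*` and
`b_j ∈ A_u(B)`, so `φ(a_t) = 0` because `φ` lies over `0`. Hence `G` is constant:
`φ(f ∘ r • id) = φ(f ∘ r • P)`. As `r → 1` both sides converge, since `f` is uniformly continuous
and `φ` is continuous for the supremum norm.
-/

open Set

section CauchyEstimates

variable {E F : Type*} [NormedAddCommGroup E] [NormedSpace ℂ E]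
  [NormedAddCommGroup F] [NormedSpace ℂ F] {f : E → F} {s : Set E} {M ε : ℝ}

theorem norm_fderiv_le_of_ball_subset {y : E} (hf : DifferentiableOn ℂ f s)
    (hM : ∀ z ∈ s, ‖f z‖ ≤ M) (hε : 0 < ε) (hy : ball y ε ⊆ s) :
    ‖fderiv ℂ f y‖ ≤ 2 * M / ε := by
  have hM0 : 0 ≤ M := (norm_nonneg _).trans (hM y (hy (mem_ball_self hε)))
  refine ContinuousLinearMap.opNorm_le_bound _ (by positivity) fun v => ?_
  rcases eq_or_ne v 0 with rfl | hv
  · simp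
  have hv' : 0 < ‖v‖ := norm_pos_iff.2 hv
  set R := ε / (2 * ‖v‖)
  have hR : 0 < R := by positivity
  have hline : Differentiable ℂ fun μ : ℂ => y + μ • v := by fun_prop
  have hmaps : MapsTo (fun μ : ℂ => y + μ • v) (closedBall 0 R) s := by
    intro μ hμ
    apply hy
    rw [mem_closedBall_zero_iff] at hμ
    rw [mem_ball_iff_norm, add_sub_cancel_left, norm_smul]
    calc ‖μ‖ * ‖v‖ ≤ R * ‖v‖ := by gcongr
      _ < ε := by simp only [R]; field_simp; linarith
  have hslice : DiffContOnCl ℂ (fun μ : ℂ => f (y + μ • v)) (ball 0 R) := by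
    refine DifferentiableOn.diffContOnCl ?_
    rw [closure_ball _ hR.ne']
    exact hf.comp hline.differentiableOn hmaps
  have hderiv : deriv (fun μ : ℂ => f (y + μ • v)) 0 = fderiv ℂ f y v := by
    have hfy : DifferentiableAt ℂ f y :=
      hf.differentiableAt (mem_of_superset (ball_mem_nhds y hε) hy)
    have hl : HasDerivAt (fun μ : ℂ => y + μ • v) v 0 := by
      simpa using ((hasDerivAt_id (0 : ℂ)).smul_const v).const_add y
    exact (hfy.hasFDerivAt.comp_hasDerivAt_of_eq 0 hl (by simp)).deriv
  calc ‖fderiv ℂ f y v‖ = ‖deriv (fun μ : ℂ => f (y + μ • v)) 0‖ := by rw [hderiv]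
    _ ≤ M / R := Complex.norm_deriv_le_of_forall_mem_sphere_norm_le hR hslice
        fun μ hμ => hM _ (hmaps (sphere_subset_closedBall hμ))
    _ = 2 * M / ε * ‖v‖ := by simp only [R]; field_simp

theorem norm_sub_le_of_ball_subset {K : Set E} (hf : DifferentiableOn ℂ f s)
    (hM : ∀ z ∈ s, ‖f z‖ ≤ M) (hε : 0 < ε) (hK : Convex ℝ K) (hKs : ∀ y ∈ K, ball y ε ⊆ s)
    {y z : E} (hy : y ∈ K) (hz : z ∈ K) : ‖f z - f y‖ ≤ 2 * M / ε * ‖z - y‖ :=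
  hK.norm_image_sub_le_of_norm_fderiv_le
    (fun w hw => hf.differentiableAt (mem_of_superset (ball_mem_nhds w hε) (hKs w hw)))
    (fun w hw => norm_fderiv_le_of_ball_subset hf hM hε (hKs w hw)) hy hz

variable [CompleteSpace F]

theorem norm_fderiv_sub_le_of_ball_subset {K : Set E} (hf : AnalyticOnNhd ℂ f s)
    (hM : ∀ z ∈ s, ‖f z‖ ≤ M) (hε : 0 < ε) (hK : Convex ℝ K) (hKs : ∀ y ∈ K, ball y ε ⊆ s)
    {y z : E} (hy : y ∈ K) (hz : z ∈ K) :
    ‖fderiv ℂ f z - fderiv ℂ f y‖ ≤ 16 * M / ε ^ 2 * ‖z - y‖ := by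
  have hε2 : 0 < ε / 2 := half_pos hε
  set s' := {w | ball w (ε / 2) ⊆ s}
  have hs' : s' ⊆ s := fun w hw => hw (mem_ball_self hε2)
  have hM' : ∀ w ∈ s', ‖fderiv ℂ f w‖ ≤ 4 * M / ε := fun w hw =>
    (norm_fderiv_le_of_ball_subset hf.differentiableOn hM hε2 hw).trans_eq (by ring)
  have hKs' : ∀ y ∈ K, ball y (ε / 2) ⊆ s' := fun y hy w hw =>
    (ball_subset_ball' (by rw [mem_ball] at hw; linarith)).trans (hKs y hy)
  refine (norm_sub_le_of_ball_subset (hf.fderiv.differentiableOn.mono hs') hM' hε2 hK hKs' hy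
    hz).trans_eq ?_
  field_simp
  ring

theorem norm_sub_sub_fderiv_le_of_ball_subset {K : Set E} (hf : AnalyticOnNhd ℂ f s)
    (hM : ∀ z ∈ s, ‖f z‖ ≤ M) (hε : 0 < ε) (hK : Convex ℝ K) (hKs : ∀ y ∈ K, ball y ε ⊆ s)
    {y z : E} (hy : y ∈ K) (hz : z ∈ K) :
    ‖f z - f y - fderiv ℂ f y (z - y)‖ ≤ 16 * M / ε ^ 2 * ‖z - y‖ ^ 2 := by
  have hM0 : 0 ≤ M := (norm_nonneg _).trans (hM y (hKs y hy (mem_ball_self hε)))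
  have hseg : Convex ℝ (K ∩ closedBall y ‖z - y‖) := hK.inter (convex_closedBall _ _)
  have hbound : ∀ w ∈ K ∩ closedBall y ‖z - y‖,
      ‖fderiv ℂ f w - fderiv ℂ f y‖ ≤ 16 * M / ε ^ 2 * ‖z - y‖ := fun w hw => by
    refine (norm_fderiv_sub_le_of_ball_subset hf hM hε hK hKs hy hw.1).trans ?_
    gcongr
    exact mem_closedBall_iff_norm.1 hw.2
  have := hseg.norm_image_sub_le_of_norm_fderiv_le'
    (fun w hw => (hf w (hKs w hw.1 (mem_ball_self hε))).differentiableAt) hbound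
    ⟨hy, mem_closedBall_self (norm_nonneg _)⟩ ⟨hz, mem_closedBall_iff_norm.2 le_rfl⟩
  rwa [mul_assoc, ← sq] at this

end CauchyEstimates

theorem eq_of_norm_sub_le_mul_sq {E : Type*} [NormedAddCommGroup E] [NormedSpace ℝ E]
    {G : ℝ → E} {a b K : ℝ} (hab : a ≤ b)
    (h : ∀ s ∈ Icc a b, ∀ t ∈ Icc a b, ‖G s - G t‖ ≤ K * (s - t) ^ 2) : G b = G a := by
  have hderiv : ∀ t ∈ Icc a b, HasDerivWithinAt G 0 (Icc a b) t := fun t ht => by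
    rw [hasDerivWithinAt_iff_isLittleO]
    simp only [smul_zero, sub_zero]
    refine (Asymptotics.IsBigO.of_bound K ?_).trans_isLittleO
      ((Asymptotics.isLittleO_pow_sub_sub t one_lt_two).mono nhdsWithin_le_nhds)
    filter_upwards [self_mem_nhdsWithin] with s hs
    simpa [Real.norm_eq_abs, sq_abs] using h s hs t ht
  have := (convex_Icc a b).norm_image_sub_le_of_norm_hasDerivWithin_le hderiv
    (fun _ _ => norm_zero.le) (left_mem_Icc.2 hab) (right_mem_Icc.2 hab)
  simpa [sub_eq_zero] using this

theorem UniformContinuousOn.mul_of_forall_norm_le {α R : Type*} [UniformSpace α] [NormedRing R]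
    [ProperSpace R] {s : Set α} {f g : α → R} {Cf Cg : ℝ} (hf : UniformContinuousOn f s)
    (hg : UniformContinuousOn g s) (hCf : ∀ x ∈ s, ‖f x‖ ≤ Cf) (hCg : ∀ x ∈ s, ‖g x‖ ≤ Cg) :
    UniformContinuousOn (f * g) s := by
  have hmul : UniformContinuousOn (fun p : R × R => p.1 * p.2)
      (closedBall 0 Cf ×ˢ closedBall 0 Cg) :=
    ((isCompact_closedBall 0 Cf).prod (isCompact_closedBall 0 Cg)).uniformContinuousOn_of_continuous
      continuous_mul.continuousOn
  have hpair : UniformContinuousOn (fun x => (f x, g x)) s :=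
    uniformContinuousOn_iff_restrict.2 ((uniformContinuousOn_iff_restrict.1 hf).prodMk
      (uniformContinuousOn_iff_restrict.1 hg))
  exact hmul.comp hpair fun x hx =>
    ⟨mem_closedBall_zero_iff.2 (hCf x hx), mem_closedBall_zero_iff.2 (hCg x hx)⟩

theorem Metric.ball_subset_ball_of_mem_closedBall {α : Type*} [PseudoMetricSpace α] {c y : α}
    {r R : ℝ} (hy : y ∈ closedBall c r) : ball y (R - r) ⊆ ball c R :=
  ball_subset_ball' (by rw [mem_closedBall] at hy; linarith)

namespace ClusterValue

variable {X : Type*} [NormedAddCommGroup X] [NormedSpace ℂ X]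

theorem MemAu.add {f g : X → ℂ} (hf : MemAu X f) (hg : MemAu X g) : MemAu X (f + g) := by
  obtain ⟨Cf, hCf⟩ := hf.2.1
  obtain ⟨Cg, hCg⟩ := hg.2.1
  refine ⟨hf.1.add hg.1, ⟨Cf + Cg, fun x hx =>
    (norm_add_le _ _).trans (add_le_add (hCf x hx) (hCg x hx))⟩, ?_⟩
  exact uniformContinuousOn_iff_restrict.2
    ((uniformContinuousOn_iff_restrict.1 hf.2.2).add (uniformContinuousOn_iff_restrict.1 hg.2.2))

theorem MemAu.mul {f g : X → ℂ} (hf : MemAu X f) (hg : MemAu X g) : MemAu X (f * g) := by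
  obtain ⟨Cf, hCf⟩ := hf.2.1
  obtain ⟨Cg, hCg⟩ := hg.2.1
  refine ⟨hf.1.mul hg.1, ⟨Cf * Cg, fun x hx => ?_⟩, hf.2.2.mul_of_forall_norm_le hg.2.2 hCf hCg⟩
  rw [Pi.mul_apply, norm_mul]
  exact mul_le_mul (hCf x hx) (hCg x hx) (norm_nonneg _) ((norm_nonneg _).trans (hCf x hx))

theorem memAu_const (c : ℂ) : MemAu X fun _ => c :=
  ⟨analyticOn_const, ⟨‖c‖, fun _ _ => le_rfl⟩, uniformContinuous_const.uniformContinuousOn⟩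

theorem memAu_clm (ψ : X →L[ℂ] ℂ) : MemAu X ψ := by
  refine ⟨(ψ.analyticOnNhd _).analyticOn, ⟨‖ψ‖, fun x hx => ?_⟩,
    ψ.uniformContinuous.uniformContinuousOn⟩
  calc ‖ψ x‖ ≤ ‖ψ‖ * ‖x‖ := ψ.le_opNorm x
    _ ≤ ‖ψ‖ * 1 := by gcongr; exact (mem_ball_zero_iff.1 hx).le
    _ = ‖ψ‖ := mul_one _

theorem MemAu.comp_clm {f : X → ℂ} (hf : MemAu X f) (T : X →L[ℂ] X)
    (hT : MapsTo T (ball 0 1) (ball 0 1)) : MemAu X fun x => f (T x) := by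
  obtain ⟨C, hC⟩ := hf.2.1
  exact ⟨hf.1.comp (T.analyticOnNhd _).analyticOn hT, ⟨C, fun x hx => hC _ (hT hx)⟩,
    hf.2.2.comp T.uniformContinuous.uniformContinuousOn hT⟩

variable (X) in
def Au : Subalgebra ℂ (X → ℂ) where
  carrier := {f | MemAu X f}
  mul_mem' := MemAu.mul
  add_mem' := MemAu.add
  algebraMap_mem' := memAu_const

theorem Au.memAu_coe (f : Au X) : MemAu X f := f.2

theorem Au.coe_sum_mul {ι : Type*} (s : Finset ι) (ξ : ι → X →L[ℂ] ℂ) {b : ι → X → ℂ}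
    (hb : ∀ j, MemAu X (b j)) :
    ((∑ j ∈ s, (⟨ξ j, memAu_clm (ξ j)⟩ : Au X) * ⟨b j, hb j⟩ : Au X) : X → ℂ)
      = fun x => ∑ j ∈ s, ξ j x * b j x := by
  ext x
  simp

theorem memAu_sum_mul {ι : Type*} (s : Finset ι) (ξ : ι → X →L[ℂ] ℂ) {b : ι → X → ℂ}
    (hb : ∀ j, MemAu X (b j)) : MemAu X fun x => ∑ j ∈ s, ξ j x * b j x :=
  Au.coe_sum_mul s ξ hb ▸ Au.memAu_coe _

def Character.toAlgHom (φ : Character X (MemAu X)) : Au X →ₐ[ℂ] ℂ where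
  toFun f := φ.toFun f
  map_one' := φ.map_one'
  map_mul' f g := φ.map_mul' f g f.2 g.2
  map_zero' := by simpa using φ.map_smul' 0 0 (zero_mem (Au X))
  map_add' f g := φ.map_add' f g f.2 g.2
  commutes' c := by
    simpa [Algebra.algebraMap_eq_smul_one, φ.map_one'] using φ.map_smul' c 1 (one_mem (Au X))

theorem memAu_comp_of_lipschitz {h : X → ℂ} {r M L : ℝ} (hr : r < 1)
    (ha : AnalyticOnNhd ℂ h (ball 0 1)) (hM : ∀ y ∈ closedBall (0 : X) r, ‖h y‖ ≤ M)
    (hL : ∀ y ∈ closedBall (0 : X) r, ∀ z ∈ closedBall (0 : X) r, ‖h z - h y‖ ≤ L * ‖z - y‖)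
    (T : X →L[ℂ] X) (hT : MapsTo T (ball 0 1) (closedBall 0 r)) :
    MemAu X fun x => h (T x) := by
  have hlip : LipschitzOnWith (Real.toNNReal L) h (closedBall 0 r) :=
    LipschitzOnWith.of_dist_le' fun y hy z hz => by
      simpa only [dist_eq_norm] using hL z hz y hy
  exact ⟨(ha.comp (T.analyticOnNhd _) (hT.mono_right (closedBall_subset_ball hr))).analyticOn,
    ⟨M, fun x hx => hM _ (hT hx)⟩,
    hlip.uniformContinuousOn.comp T.uniformContinuous.uniformContinuousOn hT⟩

theorem MemHinf.analyticOnNhd {f : X → ℂ} (hf : MemHinf X f) : AnalyticOnNhd ℂ f (ball 0 1) :=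
  isOpen_ball.analyticOn_iff_analyticOnNhd.1 hf.1

theorem MemHinf.memAu_comp {f : X → ℂ} (hf : MemHinf X f) {r : ℝ} (hr : r < 1) (T : X →L[ℂ] X)
    (hT : MapsTo T (ball 0 1) (closedBall 0 r)) : MemAu X fun x => f (T x) := by
  obtain ⟨M, hM⟩ := hf.2
  exact memAu_comp_of_lipschitz hr hf.analyticOnNhd
    (fun y hy => hM y (closedBall_subset_ball hr hy))
    (fun y hy z hz => norm_sub_le_of_ball_subset hf.analyticOnNhd.differentiableOn hM
      (sub_pos.2 hr) (convex_closedBall 0 r) (fun _ => ball_subset_ball_of_mem_closedBall) hy hz)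
    T hT

theorem MemHinf.memAu_fderiv_comp {f : X → ℂ} (hf : MemHinf X f) {r : ℝ} (hr : r < 1)
    (T : X →L[ℂ] X) (hT : MapsTo T (ball 0 1) (closedBall 0 r)) (v : X) :
    MemAu X fun x => fderiv ℂ f (T x) v := by
  obtain ⟨M, hM⟩ := hf.2
  have hε : 0 < 1 - r := sub_pos.2 hr
  refine memAu_comp_of_lipschitz (M := 2 * M / (1 - r) * ‖v‖)
    (L := 16 * M / (1 - r) ^ 2 * ‖v‖) hr
    (((ContinuousLinearMap.apply ℂ ℂ v).analyticOnNhd _).comp hf.analyticOnNhd.fderiv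
      (mapsTo_univ _ _)) (fun y hy => ?_) (fun y hy z hz => ?_) T hT
  · exact (ContinuousLinearMap.le_opNorm _ v).trans (by
      gcongr
      exact norm_fderiv_le_of_ball_subset hf.analyticOnNhd.differentiableOn hM hε
        (ball_subset_ball_of_mem_closedBall hy))
  · change ‖fderiv ℂ f z v - fderiv ℂ f y v‖ ≤ _
    rw [← sub_apply]
    refine (ContinuousLinearMap.le_opNorm _ v).trans ?_
    have := norm_fderiv_sub_le_of_ball_subset hf.analyticOnNhd hM hε (convex_closedBall 0 r)
      (fun _ => ball_subset_ball_of_mem_closedBall) hy hz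
    calc _ ≤ 16 * M / (1 - r) ^ 2 * ‖z - y‖ * ‖v‖ := by gcongr
      _ = _ := by ring

theorem FiniteRank.exists_eq_sum_smul {V : X →L[ℂ] X} (hV : FiniteRank X V) :
    ∃ (n : ℕ) (ξ : Fin n → X →L[ℂ] ℂ) (e : Fin n → X), ∀ x, V x = ∑ j, ξ j x • e j := by
  have : FiniteDimensional ℂ (LinearMap.range (V : X →ₗ[ℂ] X)) := hV
  let b := Module.finBasis ℂ (LinearMap.range (V : X →ₗ[ℂ] X))
  let V' := V.codRestrict _ fun x => LinearMap.mem_range_self (V : X →ₗ[ℂ] X) x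
  refine ⟨_, fun j => (b.coord j).toContinuousLinearMap.comp V', fun j => b j, fun x => ?_⟩
  have h := congrArg Subtype.val (b.sum_repr (V' x))
  simp only [Submodule.coe_sum, Submodule.coe_smul] at h
  exact h.symm

theorem FiniteRank.smul {S : X →L[ℂ] X} (hS : FiniteRank X S) (c : ℂ) : FiniteRank X (c • S) :=
  have : FiniteDimensional ℂ (LinearMap.range (S : X →ₗ[ℂ] X)) := hS
  Submodule.finiteDimensional_of_le (LinearMap.range_smul_le_range (S : X →ₗ[ℂ] X) c)

theorem mapsTo_smul_ball {T : X →L[ℂ] X} (hT : MapsTo T (ball 0 1) (ball 0 1)) {c : ℂ}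
    (hc : ‖c‖ ≤ 1) : MapsTo (c • T) (ball 0 1) (ball 0 1) := fun x hx => by
  rw [mem_ball_zero_iff, smul_apply, norm_smul]
  exact (mul_le_of_le_one_left (norm_nonneg _) hc).trans_lt (mem_ball_zero_iff.1 (hT hx))

theorem mapsTo_smul_sub_add_smul {S : X →L[ℂ] X} (hP : ‖ContinuousLinearMap.id ℂ X - S‖ ≤ 1)
    {r t : ℝ} (hr : 0 ≤ r) (ht : t ∈ Icc (0 : ℝ) 1) :
    MapsTo ((r : ℂ) • (ContinuousLinearMap.id ℂ X - S) + (t : ℂ) • ((r : ℂ) • S))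
      (ball 0 1) (closedBall 0 r) := fun x hx => by
  set P := ContinuousLinearMap.id ℂ X - S
  have hx1 : ‖x‖ ≤ 1 := (mem_ball_zero_iff.1 hx).le
  have hPx : ‖P x‖ ≤ ‖x‖ := P.le_of_opNorm_le hP x |>.trans_eq (one_mul _)
  have heq : ((r : ℂ) • P + (t : ℂ) • ((r : ℂ) • S)) x
      = (r : ℂ) • (((1 - t : ℝ) : ℂ) • P x + (t : ℂ) • x) := by
    simp only [P, add_apply, smul_apply, sub_apply, ContinuousLinearMap.id_apply]
    push_cast
    module
  rw [mem_closedBall_zero_iff, heq, norm_smul, Complex.norm_real, Real.norm_of_nonneg hr]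
  refine mul_le_of_le_one_right hr ((norm_add_le _ _).trans ?_)
  rw [norm_smul, norm_smul, Complex.norm_real, Complex.norm_real, Real.norm_of_nonneg ht.1,
    Real.norm_of_nonneg (sub_nonneg.2 ht.2)]
  nlinarith [ht.1, ht.2]

theorem tendstoUniformlyOn_comp_smul {f : X → ℂ} (hf : UniformContinuousOn f (ball 0 1))
    (T : X →L[ℂ] X) (hT : MapsTo T (ball 0 1) (ball 0 1)) :
    TendstoUniformlyOn (fun (r : ℝ) x => f ((r : ℂ) • T x)) (fun x => f (T x)) (𝓝[<] 1)
      (ball 0 1) := by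
  refine hf.comp_tendstoUniformlyOn_eventually ?_ hT ?_
  · filter_upwards [Ioo_mem_nhdsLT zero_lt_one] with r hr x hx
    exact mapsTo_smul_ball hT (by simp [abs_of_pos hr.1, hr.2.le]) hx
  · refine Metric.tendstoUniformlyOn_iff.2 fun ε hε => ?_
    filter_upwards [nhdsWithin_le_nhds (ball_mem_nhds (1 : ℝ) hε)] with r hr x hx
    have hsub : T x - (r : ℂ) • T x = ((1 - r : ℝ) : ℂ) • T x := by
      push_cast
      rw [sub_smul, one_smul]
    rw [dist_eq_norm, hsub, norm_smul, Complex.norm_real, ← dist_eq_norm']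
    exact (mul_le_of_le_one_right dist_nonneg (mem_ball_zero_iff.1 (hT hx)).le).trans_lt hr

theorem MemHinf.exists_fderiv_comp_apply_eq_sum_mul {f : X → ℂ} (hf : MemHinf X f) {r : ℝ}
    (hr : r < 1) (T : X →L[ℂ] X) (hT : MapsTo T (ball 0 1) (closedBall 0 r)) {V : X →L[ℂ] X}
    (hV : FiniteRank X V) :
    ∃ (n : ℕ) (ξ : Fin n → X →L[ℂ] ℂ) (b : Fin n → X → ℂ), (∀ j, MemAu X (b j)) ∧
      (fun x => fderiv ℂ f (T x) (V x)) = fun x => ∑ j, ξ j x * b j x := by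
  obtain ⟨n, ξ, e, hVe⟩ := hV.exists_eq_sum_smul
  refine ⟨n, ξ, fun j x => fderiv ℂ f (T x) (e j),
    fun j => hf.memAu_fderiv_comp hr T hT (e j), ?_⟩
  ext x
  simp [hVe x]

theorem norm_comp_add_smul_sub_sub_le {f : X → ℂ} {M r : ℝ} (hf : AnalyticOnNhd ℂ f (ball 0 1))
    (hM : ∀ x ∈ ball (0 : X) 1, ‖f x‖ ≤ M) (hr : r < 1) (A V : X →L[ℂ] X) {s t : ℝ}
    (hs : MapsTo (A + (s : ℂ) • V) (ball 0 1) (closedBall 0 r))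
    (ht : MapsTo (A + (t : ℂ) • V) (ball 0 1) (closedBall 0 r)) {x : X} (hx : x ∈ ball 0 1) :
    ‖f ((A + (s : ℂ) • V) x) - f ((A + (t : ℂ) • V) x)
        - ((s : ℂ) - t) * fderiv ℂ f ((A + (t : ℂ) • V) x) (V x)‖
      ≤ 16 * M / (1 - r) ^ 2 * ‖V‖ ^ 2 * (s - t) ^ 2 := by
  have hM0 : 0 ≤ M := (norm_nonneg _).trans (hM 0 (mem_ball_self one_pos))
  have hdiff : (A + (s : ℂ) • V) x - (A + (t : ℂ) • V) x = ((s : ℂ) - t) • V x := by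
    simp only [add_apply, smul_apply, sub_smul]
    abel
  have hnorm : ‖(A + (s : ℂ) • V) x - (A + (t : ℂ) • V) x‖ ≤ |s - t| * ‖V‖ := by
    rw [hdiff, norm_smul, ← Complex.ofReal_sub, Complex.norm_real, Real.norm_eq_abs]
    gcongr
    exact V.le_of_opNorm_le le_rfl x |>.trans (by
      simpa using mul_le_of_le_one_right (norm_nonneg V) (mem_ball_zero_iff.1 hx).le)
  have := norm_sub_sub_fderiv_le_of_ball_subset hf hM (sub_pos.2 hr) (convex_closedBall 0 r)
    (fun _ => ball_subset_ball_of_mem_closedBall) (ht hx) (hs hx)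
  rw [hdiff, map_smul, smul_eq_mul, ← hdiff] at this
  refine this.trans ?_
  calc 16 * M / (1 - r) ^ 2 * ‖(A + (s : ℂ) • V) x - (A + (t : ℂ) • V) x‖ ^ 2
      ≤ 16 * M / (1 - r) ^ 2 * (|s - t| * ‖V‖) ^ 2 := by gcongr
    _ = 16 * M / (1 - r) ^ 2 * ‖V‖ ^ 2 * (s - t) ^ 2 := by rw [mul_pow, sq_abs]; ring

namespace Character

variable (φ : Character X (MemAu X))

theorem toFun_eq_toAlgHom {f : X → ℂ} (hf : MemAu X f) : φ.toFun f = φ.toAlgHom ⟨f, hf⟩ := rfl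

theorem toFun_sum_mul_eq_zero (hφ : φ.inFiberZero) {ι : Type*} (s : Finset ι)
    (ξ : ι → X →L[ℂ] ℂ) {b : ι → X → ℂ} (hb : ∀ j, MemAu X (b j)) :
    φ.toFun (fun x => ∑ j ∈ s, ξ j x * b j x) = 0 := by
  rw [← Au.coe_sum_mul s ξ hb]
  change φ.toAlgHom _ = 0
  simp only [map_sum, map_mul]
  exact Finset.sum_eq_zero fun j _ => by rw [← toFun_eq_toAlgHom, hφ, zero_mul]

theorem toFun_comp_add_eq (hφ : φ.inFiberZero) {f : X → ℂ} (hf : MemHinf X f) {r : ℝ}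
    (hr : r < 1) (A V : X →L[ℂ] X) (hV : FiniteRank X V)
    (hW : ∀ t ∈ Icc (0 : ℝ) 1, MapsTo (A + (t : ℂ) • V) (ball 0 1) (closedBall 0 r)) :
    φ.toFun (fun x => f ((A + V) x)) = φ.toFun (fun x => f (A x)) := by
  obtain ⟨C, hC⟩ := φ.continuous'
  obtain ⟨M, hM⟩ := hf.2
  set W : ℝ → X →L[ℂ] X := fun t => A + (t : ℂ) • V
  have hG : ∀ s ∈ Icc (0 : ℝ) 1, ∀ t ∈ Icc (0 : ℝ) 1,
      ‖φ.toFun (fun x => f (W s x)) - φ.toFun (fun x => f (W t x))‖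
        ≤ C * (16 * M / (1 - r) ^ 2 * ‖V‖ ^ 2) * (s - t) ^ 2 := by
    intro s hs t ht
    obtain ⟨n, ξ, b, hb, ha_eq⟩ := hf.exists_fderiv_comp_apply_eq_sum_mul hr (W t) (hW t ht) hV
    set a : X → ℂ := fun x => fderiv ℂ f (W t x) (V x)
    have ha : MemAu X a := ha_eq ▸ memAu_sum_mul _ ξ hb
    have hφa : φ.toFun a = 0 := ha_eq ▸ φ.toFun_sum_mul_eq_zero hφ _ ξ hb
    have hgs := hf.memAu_comp hr (W s) (hW s hs)
    have hgt := hf.memAu_comp hr (W t) (hW t ht)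
    calc ‖φ.toFun (fun x => f (W s x)) - φ.toFun (fun x => f (W t x))‖
        = ‖φ.toAlgHom (⟨_, hgs⟩ - ⟨_, hgt⟩ - ((s : ℂ) - t) • ⟨a, ha⟩)‖ := by
          simp only [map_sub, map_smul, ← toFun_eq_toAlgHom, hφa, smul_zero, sub_zero]
      _ ≤ C * (16 * M / (1 - r) ^ 2 * ‖V‖ ^ 2 * (s - t) ^ 2) :=
          hC _ _ (Au.memAu_coe _) fun x hx =>
            norm_comp_add_smul_sub_sub_le hf.analyticOnNhd hM hr A V (hW s hs) (hW t ht) hx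
      _ = C * (16 * M / (1 - r) ^ 2 * ‖V‖ ^ 2) * (s - t) ^ 2 := by ring
  simpa [W] using eq_of_norm_sub_le_mul_sq zero_le_one hG

theorem tendsto_toFun_of_tendstoUniformlyOn {ι : Type*} {l : Filter ι} {F : ι → X → ℂ}
    {f : X → ℂ} (hF : ∀ᶠ i in l, MemAu X (F i)) (hf : MemAu X f)
    (h : TendstoUniformlyOn F f l (ball 0 1)) :
    Tendsto (fun i => φ.toFun (F i)) l (𝓝 (φ.toFun f)) := by
  obtain ⟨C, hC⟩ := φ.continuous'
  refine Metric.tendsto_nhds.2 fun ε hε => ?_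
  have hδ : 0 < ε / (|C| + 1) := by positivity
  filter_upwards [hF, Metric.tendstoUniformlyOn_iff.1 h _ hδ] with i hFi hi
  rw [dist_eq_norm, toFun_eq_toAlgHom φ hFi, toFun_eq_toAlgHom φ hf, ← map_sub]
  calc ‖φ.toAlgHom (⟨F i, hFi⟩ - ⟨f, hf⟩)‖ ≤ C * (ε / (|C| + 1)) :=
        hC _ _ (Au.memAu_coe _) fun x hx => (dist_eq_norm' (f x) (F i x)).ge.trans (hi x hx).le
    _ ≤ |C| * (ε / (|C| + 1)) := by gcongr; exact le_abs_self C
    _ < ε := by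
        rw [mul_div_assoc', div_lt_iff₀ (by positivity)]
        nlinarith

theorem tendsto_toFun_comp_smul {f : X → ℂ} (hf : MemAu X f) (T : X →L[ℂ] X)
    (hT : MapsTo T (ball 0 1) (ball 0 1)) :
    Tendsto (fun r : ℝ => φ.toFun fun x => f ((r : ℂ) • T x)) (𝓝[<] 1)
      (𝓝 (φ.toFun fun x => f (T x))) := by
  refine φ.tendsto_toFun_of_tendstoUniformlyOn ?_ (hf.comp_clm T hT)
    (tendstoUniformlyOn_comp_smul hf.2.2 T hT)
  filter_upwards [Ioo_mem_nhdsLT zero_lt_one] with r hr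
  exact hf.comp_clm _ (mapsTo_smul_ball hT (by simp [abs_of_pos hr.1, hr.2.le]))

end Character

end ClusterValue

open Metric Filter Topology ClusterValue in
theorem statement0 {X : Type*} [NormedAddCommGroup X] [NormedSpace ℂ X]
    (S : X →L[ℂ] X) (hS : FiniteRank X S)
    (hP : ‖ContinuousLinearMap.id ℂ X - S‖ = 1)
    (φ : Character X (MemAu X)) (hφ : φ.inFiberZero)
    (f : X → ℂ) (hf : MemAu X f) :
    φ.toFun f = φ.toFun (fun x => f ((ContinuousLinearMap.id ℂ X - S) x)) := by
  set P := ContinuousLinearMap.id ℂ X - S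
  have hPball : MapsTo P (ball 0 1) (ball 0 1) := fun x hx => by
    rw [mem_ball_zero_iff] at hx ⊢
    exact (P.le_of_opNorm_le hP.le x).trans_lt (by rwa [one_mul])
  have hdilate : ∀ r ∈ Ioo (0 : ℝ) 1,
      φ.toFun (fun x => f ((r : ℂ) • P x)) = φ.toFun (fun x => f ((r : ℂ) • x)) := by
    intro r hr
    have h := φ.toFun_comp_add_eq hφ ⟨hf.1, hf.2.1⟩ hr.2 _ _ (hS.smul r)
      fun t ht => mapsTo_smul_sub_add_smul hP.le hr.1.le ht
    exact h.symm.trans (by congr 2 with x; simp [← smul_add])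
  have hlim_id := φ.tendsto_toFun_comp_smul hf (ContinuousLinearMap.id ℂ X) (mapsTo_id _)
  have hlim_P := φ.tendsto_toFun_comp_smul hf P hPball
  exact tendsto_nhds_unique hlim_id
    (hlim_P.congr' (eventually_of_mem (Ioo_mem_nhdsLT zero_lt_one) hdilate))
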